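/- arXiv:1702.06305 — 3 statements merged into one kernel-verified Lean document; each statement's English description precedes it below -/
import Mathlib

section
/- Let X = [[A, C],[Cᵀ, B]] be a real symmetric (n+m)×(n+m) block matrix with A an n×n symmetric block. Then rank(X) = rank(A) if and only if there exists an n×m real matrix Λ such that C = AΛ and B = Λᵀ A Λ. -/
open Matrix

/-!
If `rank X = rank A`, the column space of `X` is already spanned by its first `n` columns, so the
last `m` columns are `[A; Cᵀ] Λ` for some `Λ`; reading off the blocks gives `C = AΛ` and
`B = CᵀΛ = ΛᵀAΛ`. Conversely, `C = AΛ` and `B = ΛᵀAΛ` mean `X = [I Λ]ᵀ A [I Λ]`, whose rank is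
at most `rank A`, while `A` is a submatrix of `X`.
-/

namespace Matrix

section CommSemiring

variable {R : Type*} [CommSemiring R] {k n m : Type*}

theorem range_mulVecLin_mul_le [Fintype n] [Fintype m] (P : Matrix k n R) (M : Matrix n m R) :
    LinearMap.range (P * M).mulVecLin ≤ LinearMap.range P.mulVecLin := by
  rw [mulVecLin_mul]
  exact LinearMap.range_comp_le_range _ _

theorem exists_eq_mul_of_range_mulVecLin_le [Fintype n] [Fintype m] [DecidableEq m]
    {P : Matrix k n R} {Q : Matrix k m R}
    (h : LinearMap.range Q.mulVecLin ≤ LinearMap.range P.mulVecLin) :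
    ∃ M : Matrix n m R, Q = P * M := by
  choose f hf using fun j : m => h ⟨Pi.single j 1, rfl⟩
  refine ⟨(of f)ᵀ, ext_of_mulVec_single fun j => ?_⟩
  rw [← mulVec_mulVec, mulVec_single_one (of f)ᵀ]
  exact (hf j).symm

theorem transpose_fromCols_one_mul_mul_fromCols_one [Fintype n] [DecidableEq n]
    (A : Matrix n n R) (L : Matrix n m R) :
    (fromCols 1 L)ᵀ * A * fromCols 1 L = fromBlocks A (A * L) (Lᵀ * A) (Lᵀ * A * L) := by
  rw [transpose_fromCols, transpose_one, Matrix.mul_assoc, mul_fromCols, fromRows_mul_fromCols]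
  simp only [Matrix.one_mul, Matrix.mul_one, Matrix.mul_assoc]

variable [StrongRankCondition R]

theorem rank_le_rank_fromRows [Fintype k] (P : Matrix n k R) (Q : Matrix m k R) :
    P.rank ≤ (fromRows P Q).rank :=
  rank_submatrix_le (fromRows P Q) Sum.inl id

theorem rank_le_rank_fromBlocks [Fintype n] [Fintype m] (A : Matrix n n R) (B : Matrix n m R)
    (C : Matrix m n R) (D : Matrix m m R) : A.rank ≤ (fromBlocks A B C D).rank :=
  rank_submatrix_le (fromBlocks A B C D) Sum.inl Sum.inl

theorem rank_fromBlocks_mul_le [Fintype n] [Fintype m] [DecidableEq n]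
    (A : Matrix n n R) (L : Matrix n m R) :
    (fromBlocks A (A * L) (Lᵀ * A) (Lᵀ * A * L)).rank ≤ A.rank := by
  rw [← transpose_fromCols_one_mul_mul_fromCols_one]
  exact (rank_mul_le_left _ _).trans (rank_mul_le_right _ _)

end CommSemiring

variable {K : Type*} [Field K] {k n m : Type*} [Fintype n] [Fintype m]
  [DecidableEq n] [DecidableEq m]

theorem exists_eq_mul_of_rank_fromCols_le {P : Matrix k n K} {Q : Matrix k m K}
    (h : (fromCols P Q).rank ≤ P.rank) : ∃ M : Matrix n m K, Q = P * M := by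
  have hP := range_mulVecLin_mul_le (fromCols P Q) (fromRows (1 : Matrix n n K) 0)
  have hQ := range_mulVecLin_mul_le (fromCols P Q) (fromRows 0 (1 : Matrix m m K))
  simp only [fromCols_mul_fromRows, Matrix.mul_one, Matrix.mul_zero, add_zero] at hP
  simp only [fromCols_mul_fromRows, Matrix.mul_one, Matrix.mul_zero, zero_add] at hQ
  exact exists_eq_mul_of_range_mulVecLin_le (hQ.trans (Submodule.eq_of_le_of_finrank_le hP h).ge)

theorem exists_eq_mul_of_rank_fromBlocks_le {A : Matrix n n K} {B : Matrix m m K}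
    {C : Matrix n m K} (hA : A.IsSymm) (h : (fromBlocks A C Cᵀ B).rank ≤ A.rank) :
    ∃ L : Matrix n m K, C = A * L ∧ B = Lᵀ * A * L := by
  obtain ⟨L, hL⟩ := exists_eq_mul_of_rank_fromCols_le (P := fromRows A Cᵀ) (Q := fromRows C B)
    (by rw [fromCols_fromRows_eq_fromBlocks]; exact h.trans (rank_le_rank_fromRows A Cᵀ))
  obtain ⟨hC, hB⟩ := fromRows_inj (hL.trans (fromRows_mul A Cᵀ L))
  refine ⟨L, hC, ?_⟩
  rw [hB, hC, transpose_mul, hA.eq, Matrix.mul_assoc]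

end Matrix

theorem rank_block_eq_iff_general (n m : ℕ)
    (A : Matrix (Fin n) (Fin n) ℝ) (B : Matrix (Fin m) (Fin m) ℝ)
    (C : Matrix (Fin n) (Fin m) ℝ) (hA : A.IsSymm) :
    (Matrix.fromBlocks A C Cᵀ B).rank = A.rank ↔
      ∃ L : Matrix (Fin n) (Fin m) ℝ, C = A * L ∧ B = Lᵀ * A * L := by
  refine ⟨fun h => exists_eq_mul_of_rank_fromBlocks_le hA h.le, ?_⟩
  rintro ⟨L, rfl, rfl⟩
  rw [transpose_mul, hA.eq]
  exact (rank_fromBlocks_mul_le A L).antisymm (rank_le_rank_fromBlocks _ _ _ _)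

theorem rank_block_eq_iff (n m : ℕ)
    (A : Matrix (Fin n) (Fin n) ℝ) (B : Matrix (Fin m) (Fin m) ℝ)
    (C : Matrix (Fin n) (Fin m) ℝ) (hA : A.IsSymm) (hB : B.IsSymm) :
    (Matrix.fromBlocks A C Cᵀ B).rank = A.rank ↔
      ∃ L : Matrix (Fin n) (Fin m) ℝ, C = A * L ∧ B = Lᵀ * A * L :=
  rank_block_eq_iff_general n m A B C hA
end

section
/- A real symmetric (n+m)×(n+m) matrix E lies in the elliptope E_{n+m} if and only if there exist an integer d ≥ 1 and d×d Hermitian matrices A_1,...,A_n, B_1,...,B_m with A_i² = B_j² = (1/d) I_d for all i, j, such that E is the Gram matrix of (A_1,...,A_n, B_1,...,B_m) with respect to the Hilbert–Schmidt inner product. -/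
/-!
A positive semidefinite matrix with unit diagonal is the Gram matrix of unit vectors
`w k ∈ ℝ^r`. Take `r` pairwise anticommuting Hermitian involutions `Γ i` on `ℂ^(2^r)` (the
Jordan–Wigner matrices `1 ⊗ ⋯ ⊗ 1 ⊗ X ⊗ Z ⊗ ⋯ ⊗ Z`, built recursively from Pauli matrices).
Then `M k = 2^(-r/2) ∑ i, w k i • Γ i` satisfies `M k * M l + M l * M k = 2^(1-r) ⟪w k, w l⟫`,
which gives both `M k ^ 2 = 2^(-r)` and `Tr (M k * M l) = ⟪w k, w l⟫`.
Conversely, `xᵀ E x = Tr (H ^ 2) ≥ 0` for the Hermitian matrix `H = ∑ k, x k • M k`, and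
`E k k = Tr (d⁻¹ • 1) = 1`.
-/

open Matrix

/-- The elliptope on index type `ι`: real PSD matrices with unit diagonal. -/
def elliptope (ι : Type*) [Fintype ι] : Set (Matrix ι ι ℝ) :=
  {E | E.PosSemidef ∧ ∀ i, E i i = 1}

open Finset
open scoped Kronecker

structure IsCliffordFamily {ι A : Type*} [Ring A] [Star A] (Γ : ι → A) : Prop where
  isSelfAdjoint : ∀ i, IsSelfAdjoint (Γ i)
  mul_self : ∀ i, Γ i * Γ i = 1
  anticomm : Pairwise fun i j => Γ i * Γ j = -(Γ j * Γ i)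

namespace IsCliffordFamily

variable {ι A : Type*} [Ring A] [StarRing A] {Γ : ι → A}

theorem mul_add_mul [DecidableEq ι] (hΓ : IsCliffordFamily Γ) (i j : ι) :
    Γ i * Γ j + Γ j * Γ i = if i = j then 2 else 0 := by
  split_ifs with h
  · rw [h, hΓ.mul_self, one_add_one_eq_two]
  · rw [hΓ.anticomm h, neg_add_cancel]

variable [Fintype ι] [Algebra ℝ A]

theorem sum_smul_mul_add (hΓ : IsCliffordFamily Γ) (v w : ι → ℝ) :
    (∑ i, v i • Γ i) * (∑ i, w i • Γ i) + (∑ i, w i • Γ i) * (∑ i, v i • Γ i) =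
      (2 * (v ⬝ᵥ w)) • 1 := by
  classical
  calc (∑ i, v i • Γ i) * (∑ i, w i • Γ i) + (∑ i, w i • Γ i) * (∑ i, v i • Γ i)
      = ∑ i, ∑ j, (v i * w j) • (Γ i * Γ j + Γ j * Γ i) := by
        simp only [sum_mul_sum, smul_mul_smul_comm, smul_add, sum_add_distrib, mul_comm (w _)]
        rw [sum_comm (f := fun i j => (v j * w i) • (Γ i * Γ j))]
    _ = (2 * (v ⬝ᵥ w)) • 1 := by
        simp only [hΓ.mul_add_mul, smul_ite, smul_zero, sum_ite_eq, mem_univ, if_true,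
          dotProduct, mul_sum, sum_smul]
        refine sum_congr rfl fun i _ => ?_
        rw [mul_comm (2 : ℝ), mul_smul (v i * w i) 2 (1 : A), two_smul, one_add_one_eq_two]

theorem sum_smul_mul_self (hΓ : IsCliffordFamily Γ) (v : ι → ℝ) :
    (∑ i, v i • Γ i) * (∑ i, v i • Γ i) = (v ⬝ᵥ v) • 1 := by
  have h := hΓ.sum_smul_mul_add v v
  rw [← two_smul ℝ, mul_smul] at h
  exact smul_right_injective A two_ne_zero h

theorem isSelfAdjoint_sum_smul [StarModule ℝ A] (hΓ : IsCliffordFamily Γ) (v : ι → ℝ) :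
    IsSelfAdjoint (∑ i, v i • Γ i) :=
  isSelfAdjoint_sum _ fun i _ => (IsSelfAdjoint.all (v i)).smul (hΓ.isSelfAdjoint i)

end IsCliffordFamily

theorem IsSelfAdjoint.kronecker {R l m : Type*} [CommRing R] [StarRing R]
    {A : Matrix l l R} {B : Matrix m m R} (hA : IsSelfAdjoint A) (hB : IsSelfAdjoint B) :
    IsSelfAdjoint (A ⊗ₖ B) :=
  (conjTranspose_kronecker A B).trans <| by
    rw [← star_eq_conjTranspose, ← star_eq_conjTranspose, hA.star_eq, hB.star_eq]

namespace Matrix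

theorem kronecker_neg {R l m n p : Type*} [Ring R] (A : Matrix l m R) (B : Matrix n p R) :
    A ⊗ₖ (-B) = -(A ⊗ₖ B) := by
  ext; simp

theorem neg_kronecker {R l m n p : Type*} [Ring R] (A : Matrix l m R) (B : Matrix n p R) :
    (-A) ⊗ₖ B = -(A ⊗ₖ B) := by
  ext; simp

end Matrix

section Pauli

variable (R : Type*) [Ring R]

def pauliX : Matrix (Fin 2) (Fin 2) R := !![0, 1; 1, 0]

def pauliZ : Matrix (Fin 2) (Fin 2) R := !![1, 0; 0, -1]

variable {R}

theorem isSelfAdjoint_pauliX [StarRing R] : IsSelfAdjoint (pauliX R) := by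
  ext i j; fin_cases i <;> fin_cases j <;> simp [pauliX]

theorem isSelfAdjoint_pauliZ [StarRing R] : IsSelfAdjoint (pauliZ R) := by
  ext i j; fin_cases i <;> fin_cases j <;> simp [pauliZ]

theorem pauliX_mul_self : pauliX R * pauliX R = 1 := by
  ext i j; fin_cases i <;> fin_cases j <;> simp [pauliX]

theorem pauliZ_mul_self : pauliZ R * pauliZ R = 1 := by
  ext i j; fin_cases i <;> fin_cases j <;> simp [pauliZ]

theorem pauliZ_mul_pauliX : pauliZ R * pauliX R = -(pauliX R * pauliZ R) := by
  ext i j; fin_cases i <;> fin_cases j <;> simp [pauliX, pauliZ]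

end Pauli

namespace IsCliffordFamily

variable {R n : Type*} [CommRing R] [StarRing R] [Fintype n] [DecidableEq n]

theorem reindex {m ι : Type*} [Fintype m] [DecidableEq m] {Γ : ι → Matrix n n R}
    (hΓ : IsCliffordFamily Γ) (e : n ≃ m) :
    IsCliffordFamily fun i => Matrix.reindex e e (Γ i) where
  isSelfAdjoint i := by
    rw [IsSelfAdjoint, star_eq_conjTranspose, conjTranspose_reindex, ← star_eq_conjTranspose,
      (hΓ.isSelfAdjoint i).star_eq]
  mul_self i := by rw [← coe_reindexAlgEquiv R R, ← map_mul, hΓ.mul_self, map_one]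
  anticomm i j h := by
    simp only [← coe_reindexAlgEquiv R R, ← map_mul, hΓ.anticomm h, map_neg]

theorem cons_kronecker {N : ℕ} {Γ : Fin N → Matrix n n R} (hΓ : IsCliffordFamily Γ) :
    IsCliffordFamily (Fin.cons (1 ⊗ₖ pauliX R) (fun i => Γ i ⊗ₖ pauliZ R) :
      Fin (N + 1) → Matrix (n × Fin 2) (n × Fin 2) R) where
  isSelfAdjoint i := by
    induction i using Fin.cases
    · exact (IsSelfAdjoint.one _).kronecker isSelfAdjoint_pauliX
    · exact (hΓ.isSelfAdjoint _).kronecker isSelfAdjoint_pauliZ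
  mul_self i := by
    induction i using Fin.cases <;>
      simp only [Fin.cons_zero, Fin.cons_succ, ← mul_kronecker_mul, mul_one, pauliX_mul_self,
        pauliZ_mul_self, hΓ.mul_self, one_kronecker_one]
  anticomm i j h := by
    induction i using Fin.cases <;> induction j using Fin.cases
    · exact absurd rfl h
    · simp only [Fin.cons_zero, Fin.cons_succ, ← mul_kronecker_mul, one_mul, mul_one,
        pauliZ_mul_pauliX, kronecker_neg, neg_neg]
    · simp only [Fin.cons_zero, Fin.cons_succ, ← mul_kronecker_mul, one_mul, mul_one,
        pauliZ_mul_pauliX, kronecker_neg]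
    · simp only [Fin.cons_succ, ← mul_kronecker_mul, pauliZ_mul_self,
        hΓ.anticomm (Fin.succ_injective _ |>.ne_iff.mp h), neg_kronecker]

end IsCliffordFamily

theorem exists_isCliffordFamily (R : Type*) [CommRing R] [StarRing R] (N : ℕ) :
    ∃ Γ : Fin N → Matrix (Fin (2 ^ N)) (Fin (2 ^ N)) R, IsCliffordFamily Γ := by
  induction N with
  | zero => exact ⟨finZeroElim, ⟨finZeroElim, finZeroElim, finZeroElim⟩⟩
  | succ N ih =>
    obtain ⟨Γ, hΓ⟩ := ih
    exact ⟨_, hΓ.cons_kronecker.reindex finProdFinEquiv⟩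

namespace IsCliffordFamily

variable {𝕜 ι n : Type*} [RCLike 𝕜] [Fintype ι] [Fintype n] {Γ : ι → Matrix n n 𝕜}

theorem trace_sum_smul_mul_sum_smul [DecidableEq n] (hΓ : IsCliffordFamily Γ) (v w : ι → ℝ) :
    ((∑ i, v i • Γ i) * (∑ i, w i • Γ i)).trace = ((v ⬝ᵥ w * Fintype.card n : ℝ) : 𝕜) := by
  have h := congrArg trace (hΓ.sum_smul_mul_add v w)
  rw [trace_add, trace_mul_comm (∑ i, w i • Γ i), trace_smul, trace_one,
    RCLike.real_smul_eq_coe_mul] at h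
  push_cast at h ⊢
  linear_combination h / 2

end IsCliffordFamily

theorem exists_isHermitian_trace_mul_eq_dotProduct (𝕜 : Type*) [RCLike 𝕜] {κ : Type*} {r : ℕ}
    (w : κ → Fin r → ℝ) :
    ∃ M : κ → Matrix (Fin (2 ^ r)) (Fin (2 ^ r)) 𝕜, (∀ k, (M k).IsHermitian) ∧
      (∀ k, M k * M k = (w k ⬝ᵥ w k / 2 ^ r) • 1) ∧
      ∀ k l, (M k * M l).trace = ((w k ⬝ᵥ w l : ℝ) : 𝕜) := by
  obtain ⟨Γ, hΓ⟩ := exists_isCliffordFamily 𝕜 r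
  set c : ℝ := (√(2 ^ r))⁻¹
  have hc : c * c = (2 ^ r)⁻¹ := by
    rw [← mul_inv, Real.mul_self_sqrt (by positivity)]
  refine ⟨fun k => ∑ i, (c • w k) i • Γ i, fun k => hΓ.isSelfAdjoint_sum_smul _,
    fun k => ?_, fun k l => ?_⟩
  · rw [hΓ.sum_smul_mul_self, dotProduct_smul, smul_dotProduct, smul_smul, smul_eq_mul, hc,
      inv_mul_eq_div]
  · rw [hΓ.trace_sum_smul_mul_sum_smul, dotProduct_smul, smul_dotProduct, smul_smul, smul_eq_mul,
      Fintype.card_fin, hc]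
    congr 1
    push_cast
    field_simp

theorem Matrix.PosSemidef.exists_eq_dotProduct {ι : Type*} [Finite ι] {E : Matrix ι ι ℝ}
    (hE : E.PosSemidef) : ∃ (r : ℕ) (w : ι → Fin r → ℝ), ∀ k l, E k l = w k ⬝ᵥ w l := by
  obtain ⟨r, v, rfl⟩ := posSemidef_iff_eq_sum_vecMulVec.mp hE
  exact ⟨r, fun k i => v i k, fun k l => by simp [sum_apply, vecMulVec_apply, dotProduct]⟩

open scoped ComplexOrder in
theorem Matrix.posSemidef_of_coe_eq_trace_mul {𝕜 κ n : Type*} [RCLike 𝕜] [Fintype κ] [Fintype n]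
    {M : κ → Matrix n n 𝕜} (hM : ∀ k, (M k).IsHermitian) {E : Matrix κ κ ℝ}
    (hE : ∀ k l, (E k l : 𝕜) = (M k * M l).trace) : E.PosSemidef := by
  refine .of_dotProduct_mulVec_nonneg (IsHermitian.ext fun k l => ?_) fun x => ?_
  · exact_mod_cast (hE l k).trans ((trace_mul_comm _ _).trans (hE k l).symm)
  · set H := ∑ k, x k • M k
    have hH : Hᴴ = H := isSelfAdjoint_sum _ fun k _ => (IsSelfAdjoint.all (x k)).smul (hM k)
    have hquad : ((star x ⬝ᵥ E *ᵥ x : ℝ) : 𝕜) = (Hᴴ * H).trace := by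
      rw [hH, sum_mul_sum, trace_sum]
      simp only [trace_sum, smul_mul_smul_comm, trace_smul, ← hE, RCLike.real_smul_eq_coe_mul,
        star_trivial, dotProduct, mulVec, mul_sum, RCLike.ofReal_sum, RCLike.ofReal_mul]
      exact sum_congr rfl fun k _ => sum_congr rfl fun l _ => by ring
    exact_mod_cast hquad ▸ (posSemidef_conjTranspose_mul_self H).trace_nonneg

theorem mem_elliptope_iff_matrix_factorization_general (n m : ℕ)
    (E : Matrix (Fin n ⊕ Fin m) (Fin n ⊕ Fin m) ℝ) :
    E ∈ elliptope (Fin n ⊕ Fin m) ↔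
      ∃ d : ℕ, 1 ≤ d ∧ ∃ M : Fin n ⊕ Fin m → Matrix (Fin d) (Fin d) ℂ,
        (∀ k, (M k).IsHermitian) ∧
        (∀ k, M k * M k = ((d : ℂ))⁻¹ • 1) ∧
        (∀ k l, (E k l : ℂ) = (M k * M l).trace) := by
  constructor
  · rintro ⟨hpsd, hdiag⟩
    obtain ⟨r, w, hw⟩ := hpsd.exists_eq_dotProduct
    obtain ⟨M, hherm, hsq, htr⟩ := exists_isHermitian_trace_mul_eq_dotProduct ℂ w
    refine ⟨2 ^ r, Nat.one_le_two_pow, M, hherm, fun k => ?_, fun k l => by rw [htr, hw]; rfl⟩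
    rw [hsq, ← hw, hdiag, RCLike.real_smul_eq_coe_smul (K := ℂ)]
    push_cast
    rw [one_div]
  · rintro ⟨d, hd, M, hherm, hsq, htr⟩
    refine ⟨posSemidef_of_coe_eq_trace_mul hherm htr, fun k => ?_⟩
    have h : (E k k : ℂ) = 1 := by
      rw [htr, hsq, trace_smul, trace_one, Fintype.card_fin, smul_eq_mul,
        inv_mul_cancel₀ (Nat.cast_ne_zero.mpr (by omega))]
    exact_mod_cast h

theorem mem_elliptope_iff_matrix_factorization (n m : ℕ)
    (E : Matrix (Fin n ⊕ Fin m) (Fin n ⊕ Fin m) ℝ) (hE : E.IsSymm) :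
    E ∈ elliptope (Fin n ⊕ Fin m) ↔
      ∃ d : ℕ, 1 ≤ d ∧ ∃ M : Fin n ⊕ Fin m → Matrix (Fin d) (Fin d) ℂ,
        (∀ k, (M k).IsHermitian) ∧
        (∀ k, M k * M k = ((d : ℂ))⁻¹ • 1) ∧
        (∀ k l, (E k l : ℂ) = (M k * M l).trace) :=
  mem_elliptope_iff_matrix_factorization_general n m E
end

section
/- Let E = [[A, C],[Cᵀ, B]] ∈ E_{n+m} be an extreme point of the elliptope with rank(A) = rank(E) = n, and let Λ = (λ_{ij}) be an n×m real matrix with C = AΛ and B = Λᵀ A Λ. Suppose X_1,...,X_n are d×d Hermitian matrices satisfying X_i² = I_d for all i ∈ [n] and (∑_{i=1}^n λ_{ij} X_i)² = I_d for all j ∈ [m]. Then (∑_{i=1}^n μ_i X_i)² = (μᵀ A μ) I_d for all μ ∈ R^n; in particular X_i X_j + X_j X_i = 2 A_{ij} I_d for all i, j ∈ [n]. -/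
/-!
Write `G i k = X i * X k + X k * X i - 2 A i k • 1`. Expanding the square gives
`2 • ((∑ μ i • X i)² - (μᵀ A μ) • 1) = ∑ i k, μ i μ k • G i k`; as `A` and `Λᵀ A Λ` have unit
diagonal, the hypotheses say that `G` has zero diagonal and that
`∑ i k, Λ i j Λ k j • G i k = 0` for every column `j` of `Λ`.
For any real linear functional `f`, the real symmetric matrix `S = (f (G i k))` therefore has zero
diagonal and `Λᵀ S Λ` has zero diagonal, so `E ± t [S, S Λ; Λᵀ S, Λᵀ S Λ]` lies in the elliptope;
positive definiteness of `A` makes this positive semidefinite for small `t > 0`. As `E` is the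
midpoint of the two, extremality forces `S = 0`. Hence `G = 0`.
-/

open Matrix

open scoped MatrixOrder ComplexOrder

section Matrix

variable {α ι κ : Type*} [CommSemiring α] [Fintype ι]

lemma dotProduct_mulVec_eq_sum_sum (A : Matrix ι ι α) (μ ν : ι → α) :
    μ ⬝ᵥ A *ᵥ ν = ∑ i, ∑ k, μ i * ν k * A i k := by
  simp only [dotProduct, mulVec, Finset.mul_sum]
  exact Finset.sum_congr rfl fun i _ => Finset.sum_congr rfl fun k _ => by ring

lemma transpose_mul_mul_apply_self (L : Matrix ι κ α) (S : Matrix ι ι α) (j : κ) :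
    (Lᵀ * S * L) j j = (fun i => L i j) ⬝ᵥ S *ᵥ fun i => L i j := by
  rw [dotProduct_mulVec]
  rfl

end Matrix

section PositiveDefinite

variable {𝕜 ι : Type*} [RCLike 𝕜] [Fintype ι] [DecidableEq ι]

theorem Matrix.PosSemidef.posDef_of_rank_eq_card {A : Matrix ι ι 𝕜} (hA : A.PosSemidef)
    (hrank : A.rank = Fintype.card ι) : A.PosDef := by
  rw [hA.isHermitian.posDef_iff_eigenvalues_pos]
  have hne : ∀ i, hA.isHermitian.eigenvalues i ≠ 0 := by
    rw [hA.isHermitian.rank_eq_card_non_zero_eigs] at hrank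
    by_contra! ⟨i, hi⟩
    exact (Fintype.card_subtype_lt (p := fun i => hA.isHermitian.eigenvalues i ≠ 0)
      (not_not.2 hi)).ne hrank
  exact fun i => (hA.eigenvalues_nonneg i).lt_of_ne' (hne i)

theorem Matrix.IsHermitian.exists_neg_algebraMap_le_and_le_algebraMap {S : Matrix ι ι 𝕜}
    (hS : S.IsHermitian) : ∃ c > 0, -algebraMap ℝ _ c ≤ S ∧ S ≤ algebraMap ℝ _ c := by
  obtain ⟨c, hc, hcS⟩ :=
    (ContinuousFunctionalCalculus.isCompact_spectrum (R := ℝ) S).isBounded.exists_pos_norm_le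
  refine ⟨c, hc, ?_, ?_⟩
  · rw [← map_neg, algebraMap_le_iff_le_spectrum (ha := hS.isSelfAdjoint)]
    exact fun x hx => neg_le_of_abs_le (hcS x hx)
  · rw [le_algebraMap_iff_spectrum_le (ha := hS.isSelfAdjoint)]
    exact fun x hx => le_of_abs_le (hcS x hx)

theorem Matrix.PosDef.exists_posSemidef_add_smul_and_sub_smul {A S : Matrix ι ι 𝕜}
    (hA : A.PosDef) (hS : S.IsHermitian) :
    ∃ t : ℝ, 0 < t ∧ (A + t • S).PosSemidef ∧ (A - t • S).PosSemidef := by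
  cases subsingleton_or_nontrivial (Matrix ι ι 𝕜)
  · have h0 (M : Matrix ι ι 𝕜) : M.PosSemidef := Subsingleton.elim 0 M ▸ .zero
    exact ⟨1, one_pos, h0 _, h0 _⟩
  obtain ⟨r, hr, hrA⟩ : ∃ r > 0, algebraMap ℝ _ r ≤ A :=
    (CFC.exists_pos_algebraMap_le_iff hA.isHermitian.isSelfAdjoint).2
      fun x hx => hA.isStrictlyPositive.spectrum_pos hx
  obtain ⟨c, hc, hSlo, hShi⟩ := hS.exists_neg_algebraMap_le_and_le_algebraMap
  have hrc : (r / c) • algebraMap ℝ (Matrix ι ι 𝕜) c = algebraMap ℝ _ r := by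
    rw [Algebra.smul_def, ← map_mul, div_mul_cancel₀ r hc.ne']
  refine ⟨r / c, by positivity, ?_, ?_⟩ <;> rw [← nonneg_iff_posSemidef]
  · calc (0 : Matrix ι ι 𝕜) = algebraMap ℝ _ r + (r / c) • -algebraMap ℝ _ c := by
          rw [smul_neg, hrc, add_neg_cancel]
      _ ≤ A + (r / c) • S := add_le_add hrA (smul_le_smul_of_nonneg_left hSlo (by positivity))
  · calc (0 : Matrix ι ι 𝕜) = algebraMap ℝ _ r - (r / c) • algebraMap ℝ _ c := by
          rw [hrc, sub_self]
      _ ≤ A - (r / c) • S := sub_le_sub hrA (smul_le_smul_of_nonneg_left hShi (by positivity))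

end PositiveDefinite

section GramExtension

variable {ι κ : Type*} [Fintype ι] (L : Matrix ι κ ℝ)

/-- If `T` is the Gram matrix of vectors `u i`, this is the Gram matrix of the `u i` followed by
the vectors `∑ i, L i j • u i`. -/
def gramExtension (T : Matrix ι ι ℝ) : Matrix (ι ⊕ κ) (ι ⊕ κ) ℝ :=
  fromBlocks T (T * L) (T * L)ᵀ (Lᵀ * T * L)

lemma gramExtension_add_smul (T S : Matrix ι ι ℝ) (t : ℝ) :
    gramExtension L (T + t • S) = gramExtension L T + t • gramExtension L S := by
  simp only [gramExtension, fromBlocks_smul, fromBlocks_add, Matrix.add_mul, Matrix.mul_add,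
    Matrix.smul_mul, Matrix.mul_smul, transpose_add, transpose_smul]

lemma gramExtension_eq_fromRows_mul_mul_transpose [DecidableEq ι] {T : Matrix ι ι ℝ}
    (hT : T.IsSymm) : gramExtension L T = fromRows 1 Lᵀ * T * (fromRows 1 Lᵀ)ᵀ := by
  rw [transpose_fromRows, fromRows_mul, fromRows_mul, mul_fromCols, mul_fromCols,
    fromRows_fromCols_eq_fromBlocks, gramExtension, transpose_mul, hT.eq]
  simp [Matrix.mul_assoc]

lemma Matrix.PosSemidef.gramExtension [Fintype κ] {T : Matrix ι ι ℝ} (hT : T.PosSemidef) :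
    (gramExtension L T).PosSemidef := by
  classical
  rw [gramExtension_eq_fromRows_mul_mul_transpose L (isHermitian_iff_isSymm.1 hT.isHermitian)]
  simpa using hT.mul_mul_conjTranspose_same (fromRows (1 : Matrix ι ι ℝ) Lᵀ)

lemma gramExtension_mem_elliptope_iff [Fintype κ] {T : Matrix ι ι ℝ} :
    gramExtension L T ∈ elliptope (ι ⊕ κ) ↔
      T.PosSemidef ∧ (∀ i, T i i = 1) ∧ ∀ j, (Lᵀ * T * L) j j = 1 := by
  refine ⟨fun ⟨hpsd, hdiag⟩ => ⟨?_, fun i => hdiag (.inl i), fun j => hdiag (.inr j)⟩,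
    fun ⟨hT, hdiag, hdiagL⟩ => ⟨hT.gramExtension L, ?_⟩⟩
  · exact hpsd.submatrix Sum.inl
  · rintro (i | j)
    exacts [hdiag i, hdiagL j]

theorem eq_zero_of_gramExtension_mem_extremePoints [Fintype κ] {A S : Matrix ι ι ℝ}
    (hE : gramExtension L A ∈ (elliptope (ι ⊕ κ)).extremePoints ℝ) (hA : A.PosDef)
    (hS : S.IsHermitian) (hdiag : ∀ i, S i i = 0) (hdiagL : ∀ j, (Lᵀ * S * L) j j = 0) :
    S = 0 := by
  classical
  obtain ⟨t, ht, hplus, hminus⟩ := hA.exists_posSemidef_add_smul_and_sub_smul hS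
  obtain ⟨-, hAdiag, hAdiagL⟩ := (gramExtension_mem_elliptope_iff L).1 hE.1
  have hmem : ∀ s : ℝ, (A + s • S).PosSemidef →
      gramExtension L A + s • gramExtension L S ∈ elliptope (ι ⊕ κ) := fun s hs => by
    rw [← gramExtension_add_smul, gramExtension_mem_elliptope_iff]
    refine ⟨hs, fun i => ?_, fun j => ?_⟩
    · simp [hAdiag i, hdiag i]
    · simp [Matrix.add_mul, Matrix.mul_add, hAdiagL j, hdiagL j]
  have hseg : gramExtension L A ∈ openSegment ℝ (gramExtension L A + t • gramExtension L S)
      (gramExtension L A + (-t) • gramExtension L S) :=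
    ⟨1 / 2, 1 / 2, by norm_num, by norm_num, by norm_num, by module⟩
  have hD : t • gramExtension L S = 0 := by
    simpa using hE.2 (hmem t hplus) (hmem (-t) (by simpa [sub_eq_add_neg] using hminus)) hseg
  ext i k
  simpa [gramExtension] using
    congrFun₂ ((smul_eq_zero.1 hD).resolve_left ht.ne') (.inl i) (.inl k)

end GramExtension

section Clifford

variable {ι κ R : Type*} [Fintype ι] [Ring R] [Algebra ℝ R]

def cliffordDefect (A : Matrix ι ι ℝ) (X : ι → R) (i k : ι) : R :=
  X i * X k + X k * X i - (2 * A i k) • 1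

lemma sum_sum_smul_cliffordDefect (A : Matrix ι ι ℝ) (X : ι → R) (μ : ι → ℝ) :
    ∑ i, ∑ k, (μ i * μ k) • cliffordDefect A X i k
      = (2 : ℝ) • ((∑ i, μ i • X i) * (∑ i, μ i • X i) - (μ ⬝ᵥ A *ᵥ μ) • 1) := by
  have hsq : (∑ i, μ i • X i) * (∑ i, μ i • X i) = ∑ i, ∑ k, (μ i * μ k) • (X i * X k) := by
    simp_rw [Finset.sum_mul_sum, smul_mul_smul_comm]
  have hswap : ∑ i, ∑ k, (μ i * μ k) • (X k * X i) = ∑ i, ∑ k, (μ i * μ k) • (X i * X k) := by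
    rw [Finset.sum_comm]
    exact Finset.sum_congr rfl fun i _ => Finset.sum_congr rfl fun k _ => by rw [mul_comm]
  have hscalar : ∑ i, ∑ k, (μ i * μ k) • (2 * A i k) • (1 : R) = (2 * (μ ⬝ᵥ A *ᵥ μ)) • 1 := by
    simp only [smul_smul, ← Finset.sum_smul, dotProduct_mulVec_eq_sum_sum, Finset.mul_sum]
    congr 1
    exact Finset.sum_congr rfl fun i _ => Finset.sum_congr rfl fun k _ => by ring
  simp only [cliffordDefect, smul_sub, smul_add, Finset.sum_sub_distrib, Finset.sum_add_distrib,
    hswap, ← hsq, hscalar]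
  rw [two_smul, smul_smul]

theorem cliffordDefect_eq_zero_of_mem_extremePoints [Fintype κ] {A : Matrix ι ι ℝ}
    {L : Matrix ι κ ℝ} (hE : gramExtension L A ∈ (elliptope (ι ⊕ κ)).extremePoints ℝ)
    (hA : A.PosDef) {X : ι → R} (hsq : ∀ i, X i * X i = 1)
    (hcol : ∀ j, (∑ i, L i j • X i) * (∑ i, L i j • X i) = 1) :
    cliffordDefect A X = 0 := by
  obtain ⟨-, hAdiag, hAdiagL⟩ := (gramExtension_mem_elliptope_iff L).1 hE.1
  have hsymm : ∀ i k, cliffordDefect A X k i = cliffordDefect A X i k := fun i k => by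
    rw [cliffordDefect, cliffordDefect, add_comm,
      (isHermitian_iff_isSymm.1 hA.isHermitian).apply i k]
  have hdiag : ∀ i, cliffordDefect A X i i = 0 := fun i => by
    rw [cliffordDefect, hsq, hAdiag, mul_one, two_smul, sub_self]
  have hcolsum : ∀ j, ∑ i, ∑ k, (L i j * L k j) • cliffordDefect A X i k = 0 := fun j => by
    refine (sum_sum_smul_cliffordDefect A X fun i => L i j).trans ?_
    rw [← transpose_mul_mul_apply_self, hAdiagL, hcol, one_smul, sub_self, smul_zero]
  funext i k
  refine (Module.forall_dual_apply_eq_zero_iff ℝ _).1 fun f => ?_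
  let S : Matrix ι ι ℝ := of fun i k => f (cliffordDefect A X i k)
  have hS : S = 0 := by
    refine eq_zero_of_gramExtension_mem_extremePoints L hE hA ?_ (fun i => ?_) (fun j => ?_)
    · ext i k
      simp [S, hsymm]
    · simp [S, hdiag]
    · rw [transpose_mul_mul_apply_self, dotProduct_mulVec_eq_sum_sum, ← map_zero f, ← hcolsum j]
      simp [S, map_sum]
  exact congrFun₂ hS i k

end Clifford

theorem clifford_relations_of_extreme_general (n m d : ℕ)
    (A : Matrix (Fin n) (Fin n) ℝ) (B : Matrix (Fin m) (Fin m) ℝ)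
    (C : Matrix (Fin n) (Fin m) ℝ)
    (hExt : Matrix.fromBlocks A C Cᵀ B ∈
      Set.extremePoints ℝ (elliptope (Fin n ⊕ Fin m)))
    (hrankA : A.rank = n)
    (L : Matrix (Fin n) (Fin m) ℝ) (hL₁ : C = A * L) (hL₂ : B = Lᵀ * A * L)
    (X : Fin n → Matrix (Fin d) (Fin d) ℂ)
    (hsq : ∀ i, X i * X i = 1)
    (hcol : ∀ j, (∑ i, (L i j : ℂ) • X i) * (∑ i, (L i j : ℂ) • X i) = 1) :
    (∀ μ : Fin n → ℝ,
        (∑ i, (μ i : ℂ) • X i) * (∑ i, (μ i : ℂ) • X i)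
          = ((μ ⬝ᵥ A.mulVec μ : ℝ) : ℂ) • 1) ∧
    (∀ i j, X i * X j + X j * X i = ((2 * A i j : ℝ) : ℂ) • 1) := by
  subst hL₁ hL₂
  have hA : A.PosDef := ((gramExtension_mem_elliptope_iff L).1 hExt.1).1.posDef_of_rank_eq_card
    (by rwa [Fintype.card_fin])
  have hdefect : cliffordDefect A X = 0 :=
    cliffordDefect_eq_zero_of_mem_extremePoints hExt hA hsq (by simpa only [Complex.coe_smul])
  simp only [Complex.coe_smul]
  refine ⟨fun μ => ?_, fun i j => sub_eq_zero.1 (congrFun₂ hdefect i j)⟩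
  have h := sum_sum_smul_cliffordDefect A X μ
  simp only [hdefect, Pi.zero_apply, smul_zero, Finset.sum_const_zero] at h
  exact sub_eq_zero.1 ((smul_eq_zero.1 h.symm).resolve_left two_ne_zero)

theorem clifford_relations_of_extreme (n m d : ℕ)
    (A : Matrix (Fin n) (Fin n) ℝ) (B : Matrix (Fin m) (Fin m) ℝ)
    (C : Matrix (Fin n) (Fin m) ℝ)
    (hExt : Matrix.fromBlocks A C Cᵀ B ∈
      Set.extremePoints ℝ (elliptope (Fin n ⊕ Fin m)))
    (hrankA : A.rank = n) (hrankE : (Matrix.fromBlocks A C Cᵀ B).rank = n)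
    (L : Matrix (Fin n) (Fin m) ℝ) (hL₁ : C = A * L) (hL₂ : B = Lᵀ * A * L)
    (X : Fin n → Matrix (Fin d) (Fin d) ℂ)
    (hherm : ∀ i, (X i).IsHermitian)
    (hsq : ∀ i, X i * X i = 1)
    (hcol : ∀ j, (∑ i, (L i j : ℂ) • X i) * (∑ i, (L i j : ℂ) • X i) = 1) :
    (∀ μ : Fin n → ℝ,
        (∑ i, (μ i : ℂ) • X i) * (∑ i, (μ i : ℂ) • X i)
          = ((μ ⬝ᵥ A.mulVec μ : ℝ) : ℂ) • 1) ∧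
    (∀ i j, X i * X j + X j * X i = ((2 * A i j : ℝ) : ℂ) • 1) :=
  clifford_relations_of_extreme_general n m d A B C hExt hrankA L hL₁ hL₂ X hsq hcol
end
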